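/- Let Δ = z d/dz, a, b real, and suppose f satisfies Δ(Δ+b)(Δ−a) f = ζ f and g satisfies Δ(Δ+a)(Δ−b) g = ξ g on (0,∞). With the point-split bilinear concomitant B(f,g) = f Δ²g − (Δf)(Δg) + g Δ²f + (b−a)(g Δf − f Δg) − ab fg (Δ acting in ζ on f, in ξ on g), one has ∂/∂t [B(f(tζ), g(tξ))] = (ζ + ξ) f(tζ) g(tξ) for t > 0. Consequently if lim_{t→0+} B(f(tζ),g(tξ)) = −1 then (ζ+ξ) ∫₀¹ f(tζ)g(tξ) dt = B(f(ζ),g(ξ)) + 1. -/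

import Mathlib

open Set Filter Topology MeasureTheory intervalIntegral

/-- The Euler operator `Δ f = z f'(z)`. -/
noncomputable def eulerOp (f : ℝ → ℝ) : ℝ → ℝ := fun z => z * deriv f z

/-- The third-order operator `Δ(Δ + b)(Δ - a)`. -/
noncomputable def L3 (a b : ℝ) (f : ℝ → ℝ) : ℝ → ℝ :=
  eulerOp (fun w =>
    eulerOp (fun w' => eulerOp f w' - a * f w') w
      + b * (eulerOp f w - a * f w))

/-- The point-split bilinear concomitant `B(f, g)(ζ, ξ)`. -/
noncomputable def concomitant (a b : ℝ) (f g : ℝ → ℝ) (ζ ξ : ℝ) : ℝ :=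
  f ζ * eulerOp (eulerOp g) ξ - eulerOp f ζ * eulerOp g ξ
    + g ξ * eulerOp (eulerOp f) ζ
    + (b - a) * (g ξ * eulerOp f ζ - f ζ * eulerOp g ξ)
    - a * b * (f ζ * g ξ)

lemma hasDerivAt_of_smooth {h : ℝ → ℝ} (hh : ContDiffOn ℝ (⊤ : ℕ∞) h (Ioi 0)) {x : ℝ}
    (hx : 0 < x) : HasDerivAt h (deriv h x) x :=
  ((hh.differentiableOn (by simp)).differentiableAt (isOpen_Ioi.mem_nhds hx)).hasDerivAt

lemma euler_smooth {h : ℝ → ℝ} (hh : ContDiffOn ℝ (⊤ : ℕ∞) h (Ioi 0)) :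
    ContDiffOn ℝ (⊤ : ℕ∞) (eulerOp h) (Ioi 0) := by
  have := (contDiffOn_infty_iff_deriv_of_isOpen isOpen_Ioi).mp hh
  exact contDiffOn_id.mul this.2

lemma hasDerivAt_scale {h : ℝ → ℝ} (hh : ContDiffOn ℝ (⊤ : ℕ∞) h (Ioi 0)) {s c : ℝ}
    (hsc : 0 < s * c) : HasDerivAt (fun w => h (w * c)) (deriv h (s * c) * c) s := by
  have h0 : HasDerivAt (fun w : ℝ => w * c) c s := by simpa using (hasDerivAt_id s).mul_const c
  exact (hasDerivAt_of_smooth hh hsc).comp s h0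

lemma scale_euler {h : ℝ → ℝ} (hh : ContDiffOn ℝ (⊤ : ℕ∞) h (Ioi 0)) {s : ℝ} (hs : 0 < s)
    {z : ℝ} (hz : 0 < z) : eulerOp (fun w => h (s * w)) z = eulerOp h (s * z) := by
  have h0 : HasDerivAt (fun w : ℝ => s * w) s z := by simpa using (hasDerivAt_id z).const_mul s
  have h1 : HasDerivAt (fun w => h (s * w)) (deriv h (s * z) * s) z :=
    (hasDerivAt_of_smooth hh (by positivity)).comp z h0
  simp only [eulerOp, h1.deriv]
  ring

lemma scale_euler2 {h : ℝ → ℝ} (hh : ContDiffOn ℝ (⊤ : ℕ∞) h (Ioi 0)) {s : ℝ} (hs : 0 < s)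
    {z : ℝ} (hz : 0 < z) :
    eulerOp (eulerOp (fun w => h (s * w))) z = eulerOp (eulerOp h) (s * z) := by
  have he : eulerOp (fun w => h (s * w)) =ᶠ[𝓝 z] (fun w => eulerOp h (s * w)) := by
    filter_upwards [isOpen_Ioi.mem_nhds hz] with w hw
    exact scale_euler hh hs hw
  have h2 : eulerOp (eulerOp (fun w => h (s * w))) z
      = eulerOp (fun w => eulerOp h (s * w)) z := by
    simp only [eulerOp]
    rw [Filter.EventuallyEq.deriv_eq he]
    rfl
  rw [h2, scale_euler (euler_smooth hh) hs hz]

lemma L3_expand {a b : ℝ} {f : ℝ → ℝ} (hf : ContDiffOn ℝ (⊤ : ℕ∞) f (Ioi 0))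
    {z : ℝ} (hz : 0 < z) :
    L3 a b f z = eulerOp (eulerOp (eulerOp f)) z
      + (b - a) * eulerOp (eulerOp f) z - a * b * eulerOp f z := by
  have hf1 := euler_smooth hf
  have hf2 := euler_smooth hf1
  have he : (fun w => eulerOp (fun w' => eulerOp f w' - a * f w') w
        + b * (eulerOp f w - a * f w))
      =ᶠ[𝓝 z] (fun w => eulerOp (eulerOp f) w + (b - a) * eulerOp f w - a * b * f w) := by
    filter_upwards [isOpen_Ioi.mem_nhds hz] with w hw
    have h1 : HasDerivAt (fun w' => eulerOp f w' - a * f w')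
        (deriv (eulerOp f) w - a * deriv f w) w :=
      (hasDerivAt_of_smooth hf1 hw).sub ((hasDerivAt_of_smooth hf hw).const_mul a)
    show w * deriv (fun w' => eulerOp f w' - a * f w') w + b * (eulerOp f w - a * f w) = _
    rw [h1.deriv]
    simp only [eulerOp]
    ring
  have h2 : HasDerivAt (fun w => eulerOp (eulerOp f) w + (b - a) * eulerOp f w - a * b * f w)
      (deriv (eulerOp (eulerOp f)) z + (b - a) * deriv (eulerOp f) z - a * b * deriv f z) z :=
    ((hasDerivAt_of_smooth hf2 hz).add ((hasDerivAt_of_smooth hf1 hz).const_mul (b - a))).sub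
      ((hasDerivAt_of_smooth hf hz).const_mul (a * b))
  show z * deriv _ z = _
  rw [Filter.EventuallyEq.deriv_eq he, h2.deriv]
  simp only [eulerOp]
  ring

lemma B_hasDerivAt {a b ζ ξ : ℝ} (hζ : 0 < ζ) (hξ : 0 < ξ) {f g : ℝ → ℝ}
    (hf : ContDiffOn ℝ (⊤ : ℕ∞) f (Ioi 0)) (hg : ContDiffOn ℝ (⊤ : ℕ∞) g (Ioi 0))
    (hfe : ∀ z ∈ Ioi (0:ℝ), L3 a b f z = z * f z)
    (hge : ∀ z ∈ Ioi (0:ℝ), L3 b a g z = z * g z)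
    {t : ℝ} (ht : 0 < t) :
    HasDerivAt (fun s => concomitant a b f g (s * ζ) (s * ξ))
      ((ζ + ξ) * f (t * ζ) * g (t * ξ)) t := by
  have hf1 := euler_smooth hf; have hf2 := euler_smooth hf1
  have hg1 := euler_smooth hg; have hg2 := euler_smooth hg1
  have htζ : (0:ℝ) < t * ζ := by positivity
  have htξ : (0:ℝ) < t * ξ := by positivity
  have hF0 := hasDerivAt_scale hf htζ
  have hF1 := hasDerivAt_scale hf1 htζ
  have hF2 := hasDerivAt_scale hf2 htζ
  have hG0 := hasDerivAt_scale hg htξ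
  have hG1 := hasDerivAt_scale hg1 htξ
  have hG2 := hasDerivAt_scale hg2 htξ
  have hODEf : deriv (eulerOp (eulerOp f)) (t*ζ) + (b-a) * deriv (eulerOp f) (t*ζ)
      - a*b*deriv f (t*ζ) = f (t*ζ) := by
    have h := hfe (t*ζ) htζ
    rw [L3_expand hf htζ] at h
    simp only [eulerOp] at h
    refine mul_left_cancel₀ (ne_of_gt htζ) ?_
    linear_combination h
  have hODEg : deriv (eulerOp (eulerOp g)) (t*ξ) + (a-b) * deriv (eulerOp g) (t*ξ)
      - b*a*deriv g (t*ξ) = g (t*ξ) := by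
    have h := hge (t*ξ) htξ
    rw [L3_expand hg htξ] at h
    simp only [eulerOp] at h
    refine mul_left_cancel₀ (ne_of_gt htξ) ?_
    linear_combination h
  have hB := ((((hF0.mul hG2).sub (hF1.mul hG1)).add (hG0.mul hF2)).add
      (((hG0.mul hF1).sub (hF0.mul hG1)).const_mul (b-a))).sub
      ((hF0.mul hG0).const_mul (a*b))
  have hfun : (fun s => concomitant a b f g (s * ζ) (s * ξ))
      = (fun s => f (s*ζ) * eulerOp (eulerOp g) (s*ξ) - eulerOp f (s*ζ) * eulerOp g (s*ξ)
        + g (s*ξ) * eulerOp (eulerOp f) (s*ζ)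
        + (b-a) * (g (s*ξ) * eulerOp f (s*ζ) - f (s*ζ) * eulerOp g (s*ξ))
        - a*b*(f (s*ζ) * g (s*ξ))) := rfl
  rw [hfun]
  refine hB.congr_deriv ?_
  symm
  simp only [eulerOp]
  linear_combination (-(ζ * g (t*ξ))) * hODEf + (-(ξ * f (t*ζ))) * hODEg

theorem concomitant_deriv_plus (a b ζ ξ : ℝ) (hζ : 0 < ζ) (hξ : 0 < ξ)
    (f g : ℝ → ℝ)
    (hf : ContDiffOn ℝ (⊤ : ℕ∞) f (Ioi 0)) (hg : ContDiffOn ℝ (⊤ : ℕ∞) g (Ioi 0))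
    (hfe : ∀ z ∈ Ioi (0:ℝ), L3 a b f z = z * f z)
    (hge : ∀ z ∈ Ioi (0:ℝ), L3 b a g z = z * g z)
    (hint : IntervalIntegrable (fun t => f (t * ζ) * g (t * ξ))
      MeasureTheory.volume 0 1) :
    (∀ t ∈ Ioi (0:ℝ),
      deriv (fun s => concomitant a b (fun w => f (s * w)) (fun w => g (s * w)) ζ ξ) t
        = (ζ + ξ) * f (t * ζ) * g (t * ξ))
    ∧ (Tendsto (fun s => concomitant a b (fun w => f (s * w)) (fun w => g (s * w)) ζ ξ)
          (𝓝[>] (0:ℝ)) (𝓝 (-1)) →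
        (ζ + ξ) * (∫ t in (0:ℝ)..1, f (t * ζ) * g (t * ξ))
          = concomitant a b f g ζ ξ + 1) := by
  have hf' : ContDiffOn ℝ (⊤ : ℕ∞) f (Ioi 0) := hf.of_le (by simp)
  have hg' : ContDiffOn ℝ (⊤ : ℕ∞) g (Ioi 0) := hg.of_le (by simp)
  have hcong : ∀ s ∈ Ioi (0:ℝ),
      concomitant a b (fun w => f (s * w)) (fun w => g (s * w)) ζ ξ
        = concomitant a b f g (s * ζ) (s * ξ) := by
    intro s hs
    simp only [concomitant, scale_euler hf' hs hζ, scale_euler hg' hs hξ,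
      scale_euler2 hf' hs hζ, scale_euler2 hg' hs hξ]
  constructor
  · intro t ht
    have heq : (fun s => concomitant a b (fun w => f (s * w)) (fun w => g (s * w)) ζ ξ)
        =ᶠ[𝓝 t] (fun s => concomitant a b f g (s * ζ) (s * ξ)) := by
      filter_upwards [isOpen_Ioi.mem_nhds ht] with s hs using hcong s hs
    rw [heq.deriv_eq, (B_hasDerivAt hζ hξ hf' hg' hfe hge ht).deriv]
  · intro hlim
    have hB0 : Tendsto (fun s => concomitant a b f g (s * ζ) (s * ξ)) (𝓝[>] (0:ℝ))
        (𝓝 (-1)) := by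
      refine hlim.congr' ?_
      filter_upwards [self_mem_nhdsWithin] with s hs using hcong s hs
    have hB1 : Tendsto (fun s => concomitant a b f g (s * ζ) (s * ξ)) (𝓝[<] (1:ℝ))
        (𝓝 (concomitant a b f g (1 * ζ) (1 * ξ))) :=
      (B_hasDerivAt hζ hξ hf' hg' hfe hge one_pos).continuousAt.continuousWithinAt
    have hint' : IntervalIntegrable (fun t => (ζ + ξ) * f (t * ζ) * g (t * ξ))
        MeasureTheory.volume 0 1 := by
      have := hint.const_mul (ζ + ξ)
      simpa [mul_assoc] using this
    have key := integral_eq_sub_of_hasDerivAt_of_tendsto one_pos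
      (fun t ht => B_hasDerivAt hζ hξ hf' hg' hfe hge ht.1) hint' hB0 hB1
    have hmul : ∫ t in (0:ℝ)..1, (ζ + ξ) * f (t * ζ) * g (t * ξ)
        = (ζ + ξ) * ∫ t in (0:ℝ)..1, f (t * ζ) * g (t * ξ) := by
      simp_rw [mul_assoc]
      exact intervalIntegral.integral_const_mul _ _
    rw [hmul] at key
    rw [key]
    simp [sub_neg_eq_add]
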